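/- Let α ∈ PSL(2,ℂ) be loxodromic with attracting fixed point p⁺ and repelling fixed point p⁻, and let β ∈ PSL(2,ℂ). If β(p⁺) ≠ p⁻, then there exists K > 0 such that αᵏβ is loxodromic for all integers k ≥ K, and moreover |tr²(αᵏβ)| → ∞ as k → +∞. Symmetrically, if β(p⁻) ≠ p⁺, then there exists K > 0 such that αᵏβ is loxodromic for all integers k ≤ -K. -/

import Mathlib

/- Common setup: PSL(2,ℂ), its action on ℙ¹(ℂ), loxodromic/parabolic/elliptic elements,
elementary subgroups, surface groups, the pentagon group Γ and the embedding ι. -/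

noncomputable section

open Matrix

/-- `SL(2,ℂ)`. -/
abbrev SL2C : Type := Matrix.SpecialLinearGroup (Fin 2) ℂ

instance : TopologicalSpace SL2C := instTopologicalSpaceSubtype

/-- `PSL(2,ℂ)`, the quotient of `SL(2,ℂ)` by its center `{±I}`. -/
abbrev PSL2C : Type := SL2C ⧸ Subgroup.center SL2C

/-- The quotient map `SL(2,ℂ) → PSL(2,ℂ)`. -/
def projPSL : SL2C →* PSL2C := QuotientGroup.mk' (Subgroup.center SL2C)

/-- The complex projective line `ℙ¹(ℂ)`. -/
abbrev P1 : Type := Projectivization ℂ (Fin 2 → ℂ)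

/-- The square of the trace, well defined on `PSL(2,ℂ)`. -/
def trSq (g : PSL2C) : ℂ :=
  (Matrix.trace ((Quotient.out g : SL2C) : Matrix (Fin 2) (Fin 2) ℂ)) ^ 2

/-- `g` is loxodromic iff `tr² g` is not a real number in `[0,4]`. -/
def IsLoxodromic (g : PSL2C) : Prop := ¬ ∃ r : ℝ, 0 ≤ r ∧ r ≤ 4 ∧ trSq g = (r : ℂ)

/-- `g` is parabolic iff `g ≠ 1` and `tr² g = 4`. -/
def IsParabolic (g : PSL2C) : Prop := g ≠ 1 ∧ trSq g = 4

/-- `g` is elliptic iff `g ≠ 1` and `tr² g` is a real number in `[0,4)`. -/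
def IsElliptic (g : PSL2C) : Prop := g ≠ 1 ∧ ∃ r : ℝ, 0 ≤ r ∧ r < 4 ∧ trSq g = (r : ℂ)

lemma sl2_toLin'_injective (g : SL2C) :
    Function.Injective (Matrix.toLin' (g : Matrix (Fin 2) (Fin 2) ℂ)) := by
  intro v w h
  have h2 : Matrix.toLin' ((g⁻¹ : SL2C) : Matrix (Fin 2) (Fin 2) ℂ)
      (Matrix.toLin' ((g : SL2C) : Matrix (Fin 2) (Fin 2) ℂ) v) =
      Matrix.toLin' ((g⁻¹ : SL2C) : Matrix (Fin 2) (Fin 2) ℂ)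
      (Matrix.toLin' ((g : SL2C) : Matrix (Fin 2) (Fin 2) ℂ) w) := by rw [h]
  rwa [← Matrix.toLin'_mul_apply, ← Matrix.toLin'_mul_apply,
    ← Matrix.SpecialLinearGroup.coe_mul, inv_mul_cancel,
    Matrix.SpecialLinearGroup.coe_one, Matrix.toLin'_one, LinearMap.id_apply,
    LinearMap.id_apply] at h2

/-- The action of `PSL(2,ℂ)` on `ℙ¹(ℂ)` by Möbius transformations (independent of the
choice of representative, since the center acts trivially on lines). -/
def pslAct (g : PSL2C) (x : P1) : P1 :=
  Projectivization.map (Matrix.toLin' ((Quotient.out g : SL2C) : Matrix (Fin 2) (Fin 2) ℂ))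
    (sl2_toLin'_injective _) x

/-- A subgroup of `PSL(2,ℂ)` is elementary if it has a nonempty invariant subset of `ℙ¹(ℂ)`
with at most two elements, or its closure is compact. -/
def IsElementarySubgroup (G : Subgroup PSL2C) : Prop :=
  (∃ S : Set P1, S.Nonempty ∧ S.Finite ∧ S.ncard ≤ 2 ∧ ∀ g ∈ G, pslAct g '' S = S) ∨
    IsCompact (closure (G : Set PSL2C))

/-- A homomorphism to `PSL(2,ℂ)` is non-elementary if its image is non-elementary. -/
def IsNonElem {H : Type*} [Group H] (ρ : H →* PSL2C) : Prop :=
  ¬ IsElementarySubgroup ρ.range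

/-- `g` sends a fixed point of `h` to the other one. -/
def SendsFixedToOther (g h : PSL2C) : Prop :=
  ∃ p q : P1, p ≠ q ∧ pslAct h p = p ∧ pslAct h q = q ∧ (pslAct g p = q ∨ pslAct g q = p)

/-- `g` interchanges the two fixed points of `h`. -/
def InterchangesFixed (g h : PSL2C) : Prop :=
  ∃ p q : P1, p ≠ q ∧ pslAct h p = p ∧ pslAct h q = q ∧ pslAct g p = q ∧ pslAct g q = p

/-- `PSL(2,ℝ)` as a subgroup of `PSL(2,ℂ)`: the image of `SL(2,ℝ)`. -/
def PSL2R : Subgroup PSL2C :=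
  (projPSL.comp (Matrix.SpecialLinearGroup.map (n := Fin 2) Complex.ofRealHom)).range

/-- `γ₁, γ₂` generate a rank-two Schottky group: the induced map from the free group `F₂` is
injective, with discrete image, all of whose nontrivial elements are loxodromic. -/
def GeneratesSchottky (γ₁ γ₂ : PSL2C) : Prop :=
  Function.Injective (FreeGroup.lift ![γ₁, γ₂] : FreeGroup (Fin 2) →* PSL2C) ∧
    DiscreteTopology ((FreeGroup.lift ![γ₁, γ₂] : FreeGroup (Fin 2) →* PSL2C).range) ∧
    ∀ g ∈ (FreeGroup.lift ![γ₁, γ₂] : FreeGroup (Fin 2) →* PSL2C).range, g ≠ 1 → IsLoxodromic g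

/-- The commutator `[x,y] = y⁻¹x⁻¹yx` in a free group. -/
def commF {α : Type*} (x y : FreeGroup α) : FreeGroup α := y⁻¹ * x⁻¹ * y * x

/-- The surface relator `[a_g,b_g]⋯[a₁,b₁]`. -/
def surfaceRel (g : ℕ) : FreeGroup (Fin g × Bool) :=
  (((List.finRange g).reverse).map
    (fun i => commF (FreeGroup.of (i, false)) (FreeGroup.of (i, true)))).prod

/-- The genus-`g` surface group `Γ_g`. -/
abbrev SurfaceGroup (g : ℕ) : Type :=
  PresentedGroup ({surfaceRel g} : Set (FreeGroup (Fin g × Bool)))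

/-- The generator `a_{i+1}` of `Γ_g`. -/
def sgA (g : ℕ) (i : Fin g) : SurfaceGroup g := PresentedGroup.of (i, false)

/-- The generator `b_{i+1}` of `Γ_g`. -/
def sgB (g : ℕ) (i : Fin g) : SurfaceGroup g := PresentedGroup.of (i, true)

/-- The genus-2 surface group `Γ₂`. -/
abbrev Gamma2 : Type := SurfaceGroup 2
def a1 : Gamma2 := sgA 2 0
def b1 : Gamma2 := sgB 2 0
def a2 : Gamma2 := sgA 2 1
def b2 : Gamma2 := sgB 2 1

/-- Relations for the group `Γ = ⟨q₁,…,q₆ ∣ qᵢ² = 1, q₁q₂q₃q₄q₅q₆ = 1⟩`. -/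
def pentagonRels : Set (FreeGroup (Fin 6)) :=
  (Set.range fun i : Fin 6 => FreeGroup.of i * FreeGroup.of i) ∪
    {((List.finRange 6).map FreeGroup.of).prod}

/-- The group `Γ = ⟨q₁,…,q₆ ∣ qᵢ² = 1, q₁q₂q₃q₄q₅q₆ = 1⟩`. -/
abbrev GammaP : Type := PresentedGroup pentagonRels

/-- The generator `q_{i+1}` of `Γ`. -/
def qgen (i : Fin 6) : GammaP := PresentedGroup.of i

lemma qgen_mul_self (i : Fin 6) : qgen i * qgen i = 1 := by
  have hmem : FreeGroup.of i * FreeGroup.of i ∈ pentagonRels :=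
    Set.mem_union_left _ ⟨i, rfl⟩
  have h : (PresentedGroup.mk pentagonRels (FreeGroup.of i * FreeGroup.of i)) = 1 :=
    (QuotientGroup.eq_one_iff _).mpr (Subgroup.subset_normalClosure hmem)
  rw [_root_.map_mul] at h
  exact h

lemma qgen_prod : qgen 0 * (qgen 1 * (qgen 2 * (qgen 3 * (qgen 4 * qgen 5)))) = 1 := by
  have hmem : ((List.finRange 6).map FreeGroup.of).prod ∈ pentagonRels :=
    Set.mem_union_right _ rfl
  have h : (PresentedGroup.mk pentagonRels (((List.finRange 6).map FreeGroup.of).prod)) = 1 :=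
    (QuotientGroup.eq_one_iff _).mpr (Subgroup.subset_normalClosure hmem)
  have h6 : List.finRange 6 = [0, 1, 2, 3, 4, 5] := by decide
  rw [h6] at h
  simp [mul_assoc] at h
  exact h

lemma pent_helper {G : Type*} [Group G] (x : Fin 6 → G) (hx : ∀ i, x i * x i = 1)
    (hp : x 0 * (x 1 * (x 2 * (x 3 * (x 4 * x 5)))) = 1) :
    (x 4 * x 5)⁻¹ * (x 4 * x 3)⁻¹ * (x 4 * x 5) * (x 4 * x 3) *
      ((x 1 * x 2)⁻¹ * (x 1 * x 0)⁻¹ * (x 1 * x 2) * (x 1 * x 0)) = 1 := by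
  have hinv : ∀ i, (x i)⁻¹ = x i := fun i => inv_eq_of_mul_eq_one_right (hx i)
  have hrev : x 5 * (x 4 * (x 3 * (x 2 * (x 1 * x 0)))) = 1 := by
    have h := congrArg (·⁻¹) hp
    simpa [_root_.mul_inv_rev, hinv, mul_assoc] using h
  have key : ∀ (i : Fin 6) (t : G), x i * (x i * t) = t := fun i t => by
    rw [← mul_assoc, hx, one_mul]
  have key2 : ∀ t : G, x 5 * (x 4 * (x 3 * (x 2 * (x 1 * (x 0 * t))))) = t := fun t => by
    calc x 5 * (x 4 * (x 3 * (x 2 * (x 1 * (x 0 * t)))))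
        = (x 5 * (x 4 * (x 3 * (x 2 * (x 1 * x 0))))) * t := by simp [mul_assoc]
      _ = t := by rw [hrev, one_mul]
  simp only [_root_.mul_inv_rev, hinv, mul_assoc]
  simp only [key, key2]
  exact hrev

/-- The images of the generators `a₁, b₁, a₂, b₂` under `ι`. -/
def pentMap : Fin 2 × Bool → GammaP
  | (0, false) => qgen 1 * qgen 0
  | (0, true) => qgen 1 * qgen 2
  | (1, false) => qgen 4 * qgen 3
  | (1, true) => qgen 4 * qgen 5

lemma surfaceRel_two :
    surfaceRel 2 = commF (FreeGroup.of ((1 : Fin 2), false)) (FreeGroup.of ((1 : Fin 2), true)) *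
      commF (FreeGroup.of ((0 : Fin 2), false)) (FreeGroup.of ((0 : Fin 2), true)) := by
  have h : List.finRange 2 = [0, 1] := by decide
  simp [surfaceRel, h]

/-- The embedding `ι : Γ₂ → Γ`, `a₁ ↦ q₂q₁`, `b₁ ↦ q₂q₃`, `a₂ ↦ q₅q₄`, `b₂ ↦ q₅q₆`. -/
def iota : Gamma2 →* GammaP :=
  PresentedGroup.toGroup (f := pentMap) (by
    intro r hr
    rw [Set.mem_singleton_iff] at hr
    subst hr
    rw [surfaceRel_two]
    simp only [commF, _root_.map_mul, _root_.map_inv, FreeGroup.lift_apply_of]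
    have h01 : pentMap ((0 : Fin 2), false) = qgen 1 * qgen 0 := rfl
    have h02 : pentMap ((0 : Fin 2), true) = qgen 1 * qgen 2 := rfl
    have h11 : pentMap ((1 : Fin 2), false) = qgen 4 * qgen 3 := rfl
    have h12 : pentMap ((1 : Fin 2), true) = qgen 4 * qgen 5 := rfl
    rw [h01, h02, h11, h12]
    exact pent_helper (fun i => qgen i) qgen_mul_self qgen_prod)

/-- A pentagon representation: a non-elementary `ρ : Γ₂ → PSL(2,ℂ)` extending to `Γ` with
exactly one `qᵢ` killed. -/
def IsPentagonRep (ρ : Gamma2 →* PSL2C) : Prop :=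
  IsNonElem ρ ∧ ∃ ρ' : GammaP →* PSL2C, ρ'.comp iota = ρ ∧ ∃! i : Fin 6, ρ' (qgen i) = 1

/-- A primitive element of the free group `F₂`: part of a free basis. -/
def IsPrimitiveF2 (γ : FreeGroup (Fin 2)) : Prop :=
  ∃ φ : MulAut (FreeGroup (Fin 2)), φ (FreeGroup.of 0) = γ

/-- `pp` and `pm` are the attracting resp. repelling fixed points of `α`: for a representative
`A ∈ SL(2,ℂ)` with eigenvalues `l, l⁻¹`, `|l| > 1`, they are the corresponding eigenlines. -/
def IsAttrRep (α : PSL2C) (pp pm : P1) : Prop :=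
  ∃ A : SL2C, projPSL A = α ∧ ∃ l : ℂ, 1 < ‖l‖ ∧
    ∃ (v w : Fin 2 → ℂ) (hv : v ≠ 0) (hw : w ≠ 0),
      (A : Matrix (Fin 2) (Fin 2) ℂ) *ᵥ v = l • v ∧
      (A : Matrix (Fin 2) (Fin 2) ℂ) *ᵥ w = l⁻¹ • w ∧
      pp = Projectivization.mk ℂ v hv ∧ pm = Projectivization.mk ℂ w hw

/-! In an eigenbasis `(v, w)` of a representative `A` of `α`, with `A v = l v`, `A w = l⁻¹ w`,
let `c` and `f` be the diagonal entries of a representative `B` of `β`. Then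
`tr(Aᵏ B) = c lᵏ + f l⁻ᵏ`. If `c = 0` then `B` maps the line of `v` to that of `w`, i.e.
`β(p⁺) = p⁻`; so when `β(p⁺) ≠ p⁻` we get `|tr(Aᵏ B)| ≥ |c| |l|ᵏ - |f| → ∞`, and a squared trace
of modulus `> 4` cannot lie in `[0, 4]`. For `k → -∞` the roles of `c` and `f` are exchanged. -/

open Filter

lemma tendsto_zpow_atTop_atTop_of_one_lt {r : ℝ} (hr : 1 < r) :
    Tendsto (fun k : ℤ => r ^ k) atTop atTop := by
  rw [tendsto_atTop_atTop]
  intro b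
  obtain ⟨N, hN⟩ := tendsto_atTop_atTop.mp (tendsto_pow_atTop_atTop_of_one_lt hr) b
  refine ⟨N, fun k hk => ?_⟩
  calc b ≤ r ^ N := hN N le_rfl
    _ = r ^ (N : ℤ) := (zpow_natCast r N).symm
    _ ≤ r ^ k := zpow_le_zpow_right₀ hr.le hk

lemma tendsto_norm_mul_zpow_add_mul_zpow_neg {𝕜 : Type*} [NormedField 𝕜] {c l : 𝕜} (f : 𝕜)
    (hc : c ≠ 0) (hl : 1 < ‖l‖) :
    Tendsto (fun k : ℤ => ‖c * l ^ k + f * l ^ (-k)‖) atTop atTop := by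
  have hlower : Tendsto (fun k : ℤ => ‖c‖ * ‖l‖ ^ k - ‖f‖) atTop atTop :=
    tendsto_atTop_add_const_right _ _
      ((tendsto_zpow_atTop_atTop_of_one_lt hl).const_mul_atTop (norm_pos_iff.mpr hc))
  refine tendsto_atTop_mono' _ ?_ hlower
  filter_upwards [eventually_ge_atTop 0] with k hk
  have hsmall : ‖f * l ^ (-k)‖ ≤ ‖f‖ := by
    rw [norm_mul, norm_zpow]
    exact mul_le_of_le_one_right (norm_nonneg f)
      (zpow_le_one_of_nonpos₀ hl.le (neg_nonpos.mpr hk))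
  calc ‖c‖ * ‖l‖ ^ k - ‖f‖ ≤ ‖c * l ^ k‖ - ‖f * l ^ (-k)‖ := by
        rw [norm_mul, norm_zpow]; linarith
    _ ≤ ‖c * l ^ k + f * l ^ (-k)‖ := norm_sub_le_norm_add _ _

lemma Matrix.trace_eq_sum_repr_mulVec {ι n R : Type*} [Fintype ι] [DecidableEq ι] [Fintype n]
    [DecidableEq n] [CommRing R] (M : Matrix n n R) (b : Module.Basis ι R (n → R)) :
    M.trace = ∑ i, b.repr (M *ᵥ b i) i := by
  have hstd := LinearMap.trace_eq_matrix_trace R (Pi.basisFun R n) (Matrix.toLin' M)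
  rw [LinearMap.toMatrix_eq_toMatrix', LinearMap.toMatrix'_toLin'] at hstd
  rw [← hstd, LinearMap.trace_eq_matrix_trace R b]
  simp only [Matrix.trace, Matrix.diag, LinearMap.toMatrix_apply, Matrix.toLin'_apply]

lemma Module.Basis.repr_mulVec_of_mulVec_eq_smul {ι n R : Type*} [Fintype n] [DecidableEq n]
    [CommRing R] {M : Matrix n n R} {b : Module.Basis ι R (n → R)} {μ : ι → R}
    (hM : ∀ i, M *ᵥ b i = μ i • b i) (x : n → R) (i : ι) :
    b.repr (M *ᵥ x) i = μ i * b.repr x i := by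
  classical
  have hmaps : (b.coord i).comp (Matrix.toLin' M) = μ i • b.coord i := by
    refine b.ext fun j => ?_
    simp only [LinearMap.comp_apply, Matrix.toLin'_apply, hM, LinearMap.smul_apply]
    rw [_root_.map_smul, Module.Basis.coord_apply, Module.Basis.repr_self, smul_eq_mul,
      smul_eq_mul]
    by_cases hij : j = i
    · rw [hij]
    · rw [Finsupp.single_apply, if_neg hij, mul_zero, mul_zero]
  simpa using LinearMap.congr_fun hmaps x

namespace Matrix.SpecialLinearGroup

variable {n K : Type*} [Fintype n] [DecidableEq n] [Field K]

lemma zpow_mulVec_of_mulVec_eq_smul {A : SpecialLinearGroup n K} {v : n → K} {l : K}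
    (hl : l ≠ 0) (h : (A : Matrix n n K) *ᵥ v = l • v) (k : ℤ) :
    ((A ^ k : SpecialLinearGroup n K) : Matrix n n K) *ᵥ v = l ^ k • v := by
  have hinv : ((A⁻¹ : SpecialLinearGroup n K) : Matrix n n K) *ᵥ v = l⁻¹ • v := by
    rw [eq_inv_smul_iff₀ hl, ← Matrix.mulVec_smul, ← h, Matrix.mulVec_mulVec, ← coe_mul,
      inv_mul_cancel, coe_one, Matrix.one_mulVec]
  induction k using Int.induction_on with
  | zero => simp
  | succ k ih =>
    rw [_root_.zpow_add_one A, coe_mul, ← Matrix.mulVec_mulVec, h, Matrix.mulVec_smul, ih,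
      smul_smul, zpow_add_one₀ hl, mul_comm]
  | pred k ih =>
    rw [_root_.zpow_sub_one A, coe_mul, ← Matrix.mulVec_mulVec, hinv, Matrix.mulVec_smul, ih,
      smul_smul, zpow_sub_one₀ hl, mul_comm]

lemma trace_zpow_mul_eq_sum {ι : Type*} [Fintype ι] [DecidableEq ι] {A : SpecialLinearGroup n K}
    {b : Module.Basis ι K (n → K)} {μ : ι → K} (hμ : ∀ i, μ i ≠ 0)
    (hA : ∀ i, (A : Matrix n n K) *ᵥ b i = μ i • b i) (B : SpecialLinearGroup n K) (k : ℤ) :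
    Matrix.trace ((A ^ k * B : SpecialLinearGroup n K) : Matrix n n K) =
      ∑ i, μ i ^ k * b.repr ((B : Matrix n n K) *ᵥ b i) i := by
  rw [Matrix.trace_eq_sum_repr_mulVec _ b]
  refine Finset.sum_congr rfl fun i _ => ?_
  rw [coe_mul, ← Matrix.mulVec_mulVec, Module.Basis.repr_mulVec_of_mulVec_eq_smul
    fun j => zpow_mulVec_of_mulVec_eq_smul (hμ j) (hA j) k]

end Matrix.SpecialLinearGroup

lemma trSq_projPSL (M : SL2C) :
    trSq (projPSL M) = Matrix.trace (M : Matrix (Fin 2) (Fin 2) ℂ) ^ 2 := by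
  rw [trSq]
  set N : SL2C := Quotient.out (projPSL M)
  obtain ⟨z, hz, hNz⟩ := (QuotientGroup.mk'_eq_mk' _).mp (QuotientGroup.out_eq' (projPSL M))
  obtain ⟨r, hr, hrz⟩ := Matrix.SpecialLinearGroup.mem_center_iff.mp hz
  have hr2 : r ^ 2 = 1 := by simpa using hr
  rw [← hNz, Matrix.SpecialLinearGroup.coe_mul, ← hrz]
  simp only [Matrix.trace_fin_two, Matrix.scalar_apply, Matrix.mul_diagonal]
  linear_combination (-(N 0 0 + N 1 1) ^ 2) * hr2

lemma pslAct_mk_eq_mk_of_mulVec_eq_smul (g : PSL2C) {v w : Fin 2 → ℂ} (hv : v ≠ 0) (hw : w ≠ 0)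
    {a : ℂ} (h : ((Quotient.out g : SL2C) : Matrix (Fin 2) (Fin 2) ℂ) *ᵥ v = a • w) :
    pslAct g (Projectivization.mk ℂ v hv) = Projectivization.mk ℂ w hw := by
  rw [pslAct, Projectivization.map_mk, Projectivization.mk_eq_mk_iff']
  exact ⟨a, h.symm⟩

lemma isLoxodromic_of_four_lt_norm_trSq {g : PSL2C} (hg : 4 < ‖trSq g‖) : IsLoxodromic g := by
  rintro ⟨r, hr0, hr4, hr⟩
  rw [hr, Complex.norm_real, Real.norm_of_nonneg hr0] at hg
  linarith

lemma exists_pos_forall_isLoxodromic_of_tendsto {g : ℤ → PSL2C}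
    (hg : Tendsto (fun k => ‖trSq (g k)‖) atTop atTop) :
    ∃ K : ℤ, 0 < K ∧ ∀ k : ℤ, K ≤ k → IsLoxodromic (g k) := by
  obtain ⟨K, hK⟩ := eventually_atTop.mp (hg.eventually_gt_atTop 4)
  exact ⟨max K 1, by positivity, fun k hk =>
    isLoxodromic_of_four_lt_norm_trSq (hK k (le_of_max_le_left hk))⟩

lemma IsAttrRep.exists_trSq_zpow_mul_eq {α : PSL2C} {pp pm : P1} (h : IsAttrRep α pp pm)
    (β : PSL2C) :
    ∃ l c f : ℂ, 1 < ‖l‖ ∧ (pslAct β pp ≠ pm → c ≠ 0) ∧ (pslAct β pm ≠ pp → f ≠ 0) ∧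
      ∀ k : ℤ, trSq (α ^ k * β) = (c * l ^ k + f * l ^ (-k)) ^ 2 := by
  obtain ⟨A, rfl, l, hl, v, w, hv, hw, hAv, hAw, rfl, rfl⟩ := h
  have hl0 : l ≠ 0 := norm_pos_iff.mp (one_pos.trans hl)
  have hll : l ≠ l⁻¹ := fun heq => by
    have hinv : ‖l⁻¹‖ < 1 := norm_inv l ▸ inv_lt_one_of_one_lt₀ hl
    rw [← heq] at hinv
    linarith
  have hind : LinearIndependent ℂ ![v, w] := by
    refine Module.End.eigenvectors_linearIndependent' (Matrix.toLin' (A : Matrix (Fin 2) (Fin 2) ℂ))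
      ![l, l⁻¹] ?_ _ ?_
    · simp [Function.Injective, Fin.forall_fin_two, hll, hll.symm]
    · simp only [Fin.forall_fin_two, Module.End.hasEigenvector_iff, Module.End.mem_eigenspace_iff,
        Matrix.toLin'_apply, Matrix.cons_val_zero, Matrix.cons_val_one]
      exact ⟨⟨hAv, hv⟩, hAw, hw⟩
  set b := basisOfLinearIndependentOfCardEqFinrank hind (by simp)
  have hb : ⇑b = ![v, w] := coe_basisOfLinearIndependentOfCardEqFinrank _ _
  have hA : ∀ i, (A : Matrix (Fin 2) (Fin 2) ℂ) *ᵥ b i = ![l, l⁻¹] i • b i := by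
    simp only [Fin.forall_fin_two, hb, Matrix.cons_val_zero, Matrix.cons_val_one]
    exact ⟨hAv, hAw⟩
  set B : SL2C := Quotient.out β
  have hBv := b.sum_repr ((B : Matrix (Fin 2) (Fin 2) ℂ) *ᵥ v)
  have hBw := b.sum_repr ((B : Matrix (Fin 2) (Fin 2) ℂ) *ᵥ w)
  simp only [Fin.sum_univ_two, hb, Matrix.cons_val_zero, Matrix.cons_val_one] at hBv hBw
  refine ⟨l, b.repr (B *ᵥ v) 0, b.repr (B *ᵥ w) 1, hl, fun hβ hc => hβ ?_, fun hβ hf => hβ ?_,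
    fun k => ?_⟩
  · refine pslAct_mk_eq_mk_of_mulVec_eq_smul β hv hw (a := b.repr (B *ᵥ v) 1) ?_
    exact hBv.symm.trans (by rw [hc, zero_smul, zero_add])
  · refine pslAct_mk_eq_mk_of_mulVec_eq_smul β hw hv (a := b.repr (B *ᵥ w) 0) ?_
    exact hBw.symm.trans (by rw [hf, zero_smul, add_zero])
  · have hproj : projPSL A ^ k * β = projPSL (A ^ k * B) := by
      rw [map_mul, map_zpow]
      exact congrArg _ (QuotientGroup.out_eq' β).symm
    rw [hproj, trSq_projPSL, Matrix.SpecialLinearGroup.trace_zpow_mul_eq_sum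
      (by simp [Fin.forall_fin_two, hl0]) hA, Fin.sum_univ_two]
    simp only [hb, Matrix.cons_val_zero, Matrix.cons_val_one, _root_.inv_zpow, ← _root_.zpow_neg]
    ring

theorem statement16_general (α β : PSL2C) (pp pm : P1)
    (h : IsAttrRep α pp pm) :
    (pslAct β pp ≠ pm → ∃ K : ℤ, 0 < K ∧ (∀ k : ℤ, K ≤ k → IsLoxodromic (α ^ k * β)) ∧
      Filter.Tendsto (fun k : ℤ => ‖trSq (α ^ k * β)‖) Filter.atTop Filter.atTop) ∧
    (pslAct β pm ≠ pp → ∃ K : ℤ, 0 < K ∧ ∀ k : ℤ, k ≤ -K → IsLoxodromic (α ^ k * β)) := by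
  obtain ⟨l, c, f, hl, hc, hf, htr⟩ := h.exists_trSq_zpow_mul_eq β
  have htendsto : ∀ {c f : ℂ}, c ≠ 0 →
      Tendsto (fun k : ℤ => ‖(c * l ^ k + f * l ^ (-k)) ^ 2‖) atTop atTop := fun hc => by
    simpa only [norm_pow, Function.comp_def] using
      (tendsto_pow_atTop two_ne_zero).comp (tendsto_norm_mul_zpow_add_mul_zpow_neg _ hc hl)
  refine ⟨fun hβ => ?_, fun hβ => ?_⟩
  · have hgrowth : Tendsto (fun k : ℤ => ‖trSq (α ^ k * β)‖) atTop atTop := by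
      simpa only [htr] using htendsto (hc hβ)
    obtain ⟨K, hK, hlox⟩ := exists_pos_forall_isLoxodromic_of_tendsto hgrowth
    exact ⟨K, hK, hlox, hgrowth⟩
  · have hgrowth : Tendsto (fun j : ℤ => ‖trSq (α ^ (-j) * β)‖) atTop atTop := by
      simpa only [htr, neg_neg, add_comm] using htendsto (f := c) (hf hβ)
    obtain ⟨K, hK, hlox⟩ := exists_pos_forall_isLoxodromic_of_tendsto hgrowth
    exact ⟨K, hK, fun k hk => by simpa using hlox (-k) (by omega)⟩

/-- powers of a loxodromic element times `β` are eventually loxodromic, with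
squared traces going to infinity. -/
theorem statement16 (α β : PSL2C) (pp pm : P1) (hα : IsLoxodromic α)
    (h : IsAttrRep α pp pm) :
    (pslAct β pp ≠ pm → ∃ K : ℤ, 0 < K ∧ (∀ k : ℤ, K ≤ k → IsLoxodromic (α ^ k * β)) ∧
      Filter.Tendsto (fun k : ℤ => ‖trSq (α ^ k * β)‖) Filter.atTop Filter.atTop) ∧
    (pslAct β pm ≠ pp → ∃ K : ℤ, 0 < K ∧ ∀ k : ℤ, k ≤ -K → IsLoxodromic (α ^ k * β)) :=
  statement16_general α β pp pm h
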